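/- Let p be an odd prime, let A ∈ ℂ be a primitive 2p-th root of unity, let k ∈ ℂ satisfy k² = A^{−6−p(p+1)/2}, and set η = k · (1/(2p)) · A³ · (A² − A⁻²) · A^{p(p−1)/2} · Σ_{m=1}^{2p} (−1)^m A^{m²}. Then η² = −(A² − A⁻²)²/p. -/

import Mathlib

/-!
Since `A ^ p = -1` and `m ^ 2 ≡ m [MOD 2]`, the summand `(-1) ^ m * A ^ (m ^ 2)` is
`(-A) ^ (m ^ 2)`, where `-A` is a primitive `p`-th root of unity. The sum therefore runs twice
over the quadratic Gauss sum `∑ x : ZMod p, ψ (x ^ 2)` of the additive character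
`ψ x = (-A) ^ x.val`, whose square is `(-1) ^ ((p - 1) / 2) * p`.
In `η ^ 2` the powers of `A` from `k ^ 2` and `A ^ 3` cancel, leaving the signs
`A ^ (p * (p + 1) / 2) = (-1) ^ ((p + 1) / 2)` and `(A ^ (p * (p - 1) / 2)) ^ 2 = 1`.
-/

open Finset

namespace AddChar

variable {F R : Type*} [Field F] [Fintype F] [DecidableEq F] [CommRing R] [IsDomain R]
  [CharZero R] {ψ : AddChar F R}

theorem sum_apply_sq_eq_gaussSum (hF : ringChar F ≠ 2) (hψ : ψ ≠ 1) :
    ∑ x : F, ψ (x ^ 2) = gaussSum ((quadraticChar F).ringHomComp (Int.castRingHom R)) ψ := by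
  -- `a` has `1 + χ a` square roots, and the `1`-part contributes `∑ a, ψ a = 0`
  have hfiber : ∀ a : F, #{x | x ^ 2 = a} = ((quadraticChar F a + 1 : ℤ) : R) := by
    intro a
    have hcard := quadraticChar_card_sqrts hF a
    rw [Set.toFinset_ofPred] at hcard
    exact_mod_cast hcard
  rw [← sum_fiberwise' univ (· ^ 2) ψ, gaussSum]
  simp only [sum_const, nsmul_eq_mul, hfiber, Int.cast_add, Int.cast_one, add_mul, one_mul,
    sum_add_distrib, sum_eq_zero_of_ne_one hψ, add_zero]
  rfl

theorem sq_sum_apply_sq (hF : ringChar F ≠ 2) (hψ : ψ.IsPrimitive) :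
    (∑ x : F, ψ (x ^ 2)) ^ 2 = quadraticChar F (-1) * Fintype.card F := by
  have hψ1 : ψ ≠ 1 := fun h => hψ one_ne_zero (by rw [mulShift_one, h])
  rw [sum_apply_sq_eq_gaussSum hF hψ1, gaussSum_sq
    ((MulChar.ringHomComp_ne_one_iff Int.cast_injective).mpr (quadraticChar_ne_one hF))
    ((quadraticChar_isQuadratic F).comp _) hψ]
  rfl

end AddChar

theorem ZMod.sum_range_natCast {M : Type*} [AddCommMonoid M] (n : ℕ) [NeZero n]
    (g : ZMod n → M) : ∑ m ∈ range n, g m = ∑ x, g x :=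
  sum_nbij' (↑) ZMod.val (fun _ _ => mem_univ _) (fun x _ => mem_range.mpr x.val_lt)
    (fun _ hm => ZMod.val_cast_of_lt (mem_range.mp hm)) (fun x _ => ZMod.natCast_zmod_val x)
    (fun _ _ => rfl)

theorem ZMod.sum_range_mul_natCast {M : Type*} [AddCommMonoid M] (n : ℕ) [NeZero n]
    (g : ZMod n → M) (k : ℕ) : ∑ m ∈ range (k * n), g m = k • ∑ x, g x := by
  induction k with
  | zero => simp
  | succ k ih =>
    simp [add_mul, sum_range_add, ih, add_smul, ZMod.sum_range_natCast]

theorem Finset.sum_Icc_one_eq_sum_range {M : Type*} [AddCommMonoid M] {f : ℕ → M} {n : ℕ}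
    (h : f n = f 0) : ∑ m ∈ Icc 1 n, f m = ∑ m ∈ range n, f m := by
  have hshift : ∑ m ∈ Icc 1 n, f m = ∑ m ∈ range n, f (m + 1) := by
    rw [← Ico_add_one_right_eq_Icc, sum_Ico_eq_sum_range]
    simp only [Nat.add_sub_cancel, add_comm 1]
  cases n with
  | zero => simp
  | succ n => rw [hshift, sum_range_succ, h, sum_range_succ']

theorem neg_one_pow_mul_pow_sq {R : Type*} [CommRing R] (a : R) (m : ℕ) :
    (-1) ^ m * a ^ (m ^ 2) = (-a) ^ (m ^ 2) := by
  rw [neg_pow a, neg_one_pow_eq_pow_mod_two (m ^ 2), neg_one_pow_eq_pow_mod_two m, Nat.pow_mod]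
  rcases Nat.mod_two_eq_zero_or_one m with h | h <;> simp [h]

theorem IsPrimitiveRoot.pow_eq_neg_one {R : Type*} [CommRing R] [NoZeroDivisors R] {ζ : R}
    {n : ℕ} (hζ : IsPrimitiveRoot ζ (2 * n)) (hn : 0 < n) : ζ ^ n = -1 :=
  (hζ.pow (Nat.mul_pos two_pos hn) (mul_comm 2 n)).eq_neg_one_of_two_right

theorem IsPrimitiveRoot.neg_of_odd {R : Type*} [CommRing R] [NoZeroDivisors R] {ζ : R} {n : ℕ}
    (hζ : IsPrimitiveRoot ζ (2 * n)) (hn : Odd n) : IsPrimitiveRoot (-ζ) n := by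
  refine ⟨by rw [neg_pow, hn.neg_one_pow, hζ.pow_eq_neg_one hn.pos, neg_one_mul, neg_neg],
    fun l hl => ?_⟩
  have : ζ ^ (2 * l) = 1 := by rw [pow_mul, ← neg_sq, ← pow_mul, mul_comm, pow_mul, hl, one_pow]
  exact Nat.dvd_of_mul_dvd_mul_left two_pos (hζ.dvd_of_pow_eq_one _ this)

theorem IsPrimitiveRoot.sq_sum_Icc_pow_sq {K : Type*} [Field K] [CharZero K] {p : ℕ}
    [Fact p.Prime] (hp2 : p ≠ 2) {ζ : K} (hζ : IsPrimitiveRoot ζ p) :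
    (∑ m ∈ Icc 1 (2 * p), ζ ^ (m ^ 2)) ^ 2 = 4 * (-1) ^ (p / 2) * p := by
  let ψ := AddChar.zmodChar p hζ.pow_eq_one
  have hsum : ∑ m ∈ Icc 1 (2 * p), ζ ^ (m ^ 2) = 2 * ∑ x : ZMod p, ψ (x ^ 2) :=
    calc ∑ m ∈ Icc 1 (2 * p), ζ ^ (m ^ 2)
        = ∑ m ∈ Icc 1 (2 * p), ψ ((m : ZMod p) ^ 2) := by
          simp only [ψ, ← Nat.cast_pow, AddChar.zmodChar_apply']
      _ = ∑ m ∈ range (2 * p), ψ ((m : ZMod p) ^ 2) :=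
          sum_Icc_one_eq_sum_range (by simp)
      _ = 2 * ∑ x : ZMod p, ψ (x ^ 2) := by
          rw [ZMod.sum_range_mul_natCast p (fun x => ψ (x ^ 2)), nsmul_eq_mul, Nat.cast_two]
  have hchar : ringChar (ZMod p) ≠ 2 := by rwa [ZMod.ringChar_zmod_n]
  rw [hsum, mul_pow, AddChar.sq_sum_apply_sq hchar
    (AddChar.zmodChar_primitive_of_primitive_root p hζ), quadraticChar_neg_one hchar,
    ZMod.card, ZMod.χ₄_eq_neg_one_pow (Nat.odd_iff.mp ((Fact.out : p.Prime).odd_of_ne_two hp2))]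
  push_cast
  ring

theorem Odd.mul_add_one_div_two {p : ℕ} (hp : Odd p) : p * (p + 1) / 2 = p * (p / 2 + 1) :=
  Nat.div_eq_of_eq_mul_left two_pos (by rw [mul_assoc]; congr 1; have := Nat.odd_iff.mp hp; omega)

theorem Odd.mul_sub_one_div_two {p : ℕ} (hp : Odd p) : p * (p - 1) / 2 = p * (p / 2) :=
  Nat.div_eq_of_eq_mul_left two_pos (by rw [mul_assoc]; congr 1; have := Nat.odd_iff.mp hp; omega)

/-- For an odd prime `p`, a primitive `2p`-th root of unity `A`, and `k` with
`k² = A^{−6−p(p+1)/2}`, the quantity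
`η = k·(1/2p)·A³(A²−A⁻²)A^{p(p−1)/2}·Σ_{m=1}^{2p}(−1)^m A^{m²}` satisfies
`η² = −(A²−A⁻²)²/p`. -/
theorem eta_sq_eq (p : ℕ) (hp : p.Prime) (hodd : Odd p) (A k η : ℂ)
    (hA : IsPrimitiveRoot A (2 * p))
    (hk : k ^ 2 = A ^ (-(6 + (p * (p + 1) / 2 : ℕ) : ℤ)))
    (hη : η = k * (1 / (2 * p)) * A ^ 3 * (A ^ 2 - A ^ (-2 : ℤ)) *
      A ^ (p * (p - 1) / 2) * ∑ m ∈ Finset.Icc 1 (2 * p), (-1 : ℂ) ^ m * A ^ (m ^ 2)) :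
    η ^ 2 = -(A ^ 2 - A ^ (-2 : ℤ)) ^ 2 / p := by
  have : Fact p.Prime := ⟨hp⟩
  have hp2 : p ≠ 2 := by rintro rfl; exact absurd hodd (by decide)
  have hAp : A ^ p = -1 := hA.pow_eq_neg_one hp.pos
  have hS := (hA.neg_of_odd hodd).sq_sum_Icc_pow_sq hp2
  simp only [← neg_one_pow_mul_pow_sq] at hS
  have hk6 : k ^ 2 * A ^ 6 * (-1) ^ (p / 2) = -1 := by
    have hA0 : A ≠ 0 := hA.ne_zero (mul_ne_zero two_ne_zero hp.ne_zero)
    rw [hk, ← Nat.cast_ofNat, ← Nat.cast_add, zpow_neg, zpow_natCast, hodd.mul_add_one_div_two,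
      pow_add, pow_mul, hAp]
    field_simp
    ring
  have hAsq : (A ^ (p * (p - 1) / 2)) ^ 2 = 1 := by
    rw [hodd.mul_sub_one_div_two, pow_mul, hAp, ← pow_mul, mul_comm, pow_mul]; norm_num
  rw [hη, mul_pow, mul_pow, mul_pow, mul_pow, mul_pow, hAsq, hS]
  generalize A ^ 2 - A ^ (-2 : ℤ) = D
  have hp0 : (p : ℂ) ≠ 0 := Nat.cast_ne_zero.mpr hp.ne_zero
  field_simp
  linear_combination 4 * D ^ 2 * hk6
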